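/- arXiv:1312.6457 — 6 statements merged into one kernel-verified Lean document; each statement's English description precedes it below -/
import Mathlib

section
/- Let F be a field of characteristic p, and let d ≥ 1 be an integer such that p does not divide d + 2 (no condition if p = 0). Define f : F^d × F → F by f(x, r) = r^{d+2} + Σ_{i=1}^{d} x_i·r^i. Then for every x ∈ F^d and every (Δx, Δr, Δt) ∈ F^d × F × F with (Δx, Δr, Δt) ≠ (0, 0, 0), the set { r ∈ F : f(x + Δx, r + Δr) = f(x, r) + Δt } has at most d + 1 elements. Consequently, if F is finite with |F| = Q and r is chosen uniformly at random from F, then the probability that the algebraically manipulated codeword (x + Δx, r + Δr, f(x,r) + Δt) satisfies the AMD verification equation f(x + Δx, r + Δr) = f(x,r) + Δt is at most (d+1)/Q. -/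
/-!
Verification succeeds exactly at the roots of the tamper polynomial
`T(X) = g_{x+Δx}(X + Δr) - g_x(X) - Δt`, where `g_a(X) = X^{d+2} + ∑ a_i X^i`.
The `X^{d+2}` terms cancel, so `deg T ≤ d + 1`. If `Δr ≠ 0`, the `X^{d+1}` coefficient
of `T` is `(d+2)·Δr ≠ 0`; if `Δr = 0`, then `T = ∑ Δx_i X^i - Δt`, which vanishes only for
the zero offset. A nonzero polynomial of degree at most `d + 1` has at most `d + 1` roots.
-/

open Finset Polynomial

namespace Polynomial

variable {R : Type*} [CommRing R]

theorem natDegree_X_add_C_pow_succ_sub_X_pow_succ_le (a : R) (n : ℕ) :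
    ((X + C a) ^ (n + 1) - X ^ (n + 1)).natDegree ≤ n := by
  rw [natDegree_le_iff_coeff_eq_zero]
  intro m hm
  rcases (Nat.succ_le_of_lt hm).eq_or_lt with rfl | hlt
  · simp [coeff_X_add_C_pow]
  · simp [coeff_X_add_C_pow, coeff_X_pow, Nat.choose_eq_zero_of_lt hlt, hlt.ne']

theorem coeff_X_add_C_pow_succ_sub_X_pow_succ (a : R) (n : ℕ) :
    ((X + C a) ^ (n + 1) - X ^ (n + 1)).coeff n = (n + 1) * a := by
  simp [coeff_X_add_C_pow, coeff_X_pow, mul_comm]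

end Polynomial

theorem natCast_ne_zero_of_forall_charP_not_dvd {R : Type*} [NonAssocSemiring R] {n : ℕ}
    (h : ∀ p : ℕ, CharP R p → ¬ p ∣ n) : (n : R) ≠ 0 :=
  fun hn => h (ringChar R) (ringChar.charP R) ((ringChar.spec R n).mp hn)

namespace AMD

variable {R : Type*} [CommRing R] {d : ℕ}

noncomputable def linPart (a : Fin d → R) : R[X] := ∑ i : Fin d, C (a i) * X ^ ((i : ℕ) + 1)

noncomputable def tagPoly (a : Fin d → R) : R[X] := X ^ (d + 2) + linPart a

theorem linPart_add (a b : Fin d → R) : linPart (a + b) = linPart a + linPart b := by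
  simp only [linPart, Pi.add_apply, C_add, add_mul, sum_add_distrib]

theorem coeff_linPart_zero (a : Fin d → R) : (linPart a).coeff 0 = 0 := by
  simp [linPart, coeff_X_pow]

theorem coeff_linPart_succ (a : Fin d → R) (j : Fin d) :
    (linPart a).coeff ((j : ℕ) + 1) = a j := by
  rw [linPart, finsetSum_coeff, sum_eq_single j]
  · simp
  · intro i _ hij
    simp [coeff_X_pow, Fin.val_ne_of_ne hij.symm]
  · simp

theorem natDegree_linPart_le (a : Fin d → R) : (linPart a).natDegree ≤ d :=
  natDegree_sum_le_of_forall_le _ _ fun i _ =>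
    (natDegree_C_mul_X_pow_le _ _).trans i.isLt

theorem linPart_eq_zero_iff (a : Fin d → R) : linPart a = 0 ↔ a = 0 := by
  refine ⟨fun h => funext fun j => ?_, fun h => by simp [h, linPart]⟩
  simpa [h] using (coeff_linPart_succ a j).symm

theorem eval_tagPoly (a : Fin d → R) (r : R) :
    (tagPoly a).eval r = r ^ (d + 2) + ∑ i : Fin d, a i * r ^ ((i : ℕ) + 1) := by
  simp [tagPoly, linPart, eval_finsetSum]

noncomputable def tamperPoly (x Δx : Fin d → R) (Δr Δt : R) : R[X] :=
  (tagPoly (x + Δx)).comp (X + C Δr) - tagPoly x - C Δt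

theorem eval_tamperPoly (x Δx : Fin d → R) (Δr Δt r : R) :
    (tamperPoly x Δx Δr Δt).eval r =
      (tagPoly (x + Δx)).eval (r + Δr) - ((tagPoly x).eval r + Δt) := by
  simp only [tamperPoly, eval_sub, eval_comp, eval_add, eval_X, eval_C]
  ring

theorem tamperPoly_eq_add_linPart (x Δx : Fin d → R) (Δr Δt : R) :
    tamperPoly x Δx Δr Δt = ((X + C Δr) ^ (d + 2) - X ^ (d + 2)) +
      ((linPart (x + Δx)).comp (X + C Δr) - linPart x - C Δt) := by
  simp only [tamperPoly, tagPoly, add_comp, X_pow_comp]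
  ring

theorem tamperPoly_eq_linPart_sub_C (x Δx : Fin d → R) (Δt : R) :
    tamperPoly x Δx 0 Δt = linPart Δx - C Δt := by
  simp only [tamperPoly, tagPoly, C_0, add_zero, comp_X, linPart_add]
  ring

section Nontrivial

variable [Nontrivial R]

theorem natDegree_linPart_comp_sub_le (x Δx : Fin d → R) (Δr Δt : R) :
    ((linPart (x + Δx)).comp (X + C Δr) - linPart x - C Δt).natDegree ≤ d := by
  have hcomp : ((linPart (x + Δx)).comp (X + C Δr)).natDegree ≤ d := by
    grw [natDegree_comp_le, natDegree_X_add_C, mul_one, natDegree_linPart_le]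
  refine (natDegree_sub_le _ _).trans (max_le ?_ (by simp))
  exact (natDegree_sub_le _ _).trans (max_le hcomp (natDegree_linPart_le x))

theorem natDegree_tamperPoly_le (x Δx : Fin d → R) (Δr Δt : R) :
    (tamperPoly x Δx Δr Δt).natDegree ≤ d + 1 := by
  rw [tamperPoly_eq_add_linPart]
  exact natDegree_add_le_of_degree_le (natDegree_X_add_C_pow_succ_sub_X_pow_succ_le Δr (d + 1))
    ((natDegree_linPart_comp_sub_le x Δx Δr Δt).trans d.le_succ)

theorem coeff_tamperPoly_succ (x Δx : Fin d → R) (Δr Δt : R) :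
    (tamperPoly x Δx Δr Δt).coeff (d + 1) = ((d + 2 : ℕ) : R) * Δr := by
  rw [tamperPoly_eq_add_linPart, coeff_add, coeff_X_add_C_pow_succ_sub_X_pow_succ,
    coeff_eq_zero_of_natDegree_lt
      ((natDegree_linPart_comp_sub_le x Δx Δr Δt).trans_lt d.lt_succ_self)]
  push_cast
  ring

end Nontrivial

section IsDomain

variable [IsDomain R]

theorem tamperPoly_ne_zero (hchar : ((d + 2 : ℕ) : R) ≠ 0) {x Δx : Fin d → R} {Δr Δt : R}
    (hΔ : ¬(Δx = 0 ∧ Δr = 0 ∧ Δt = 0)) : tamperPoly x Δx Δr Δt ≠ 0 := by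
  intro h
  by_cases hΔr : Δr = 0
  · subst hΔr
    rw [tamperPoly_eq_linPart_sub_C, sub_eq_zero] at h
    have hΔt : Δt = 0 := by simpa [coeff_linPart_zero] using (congrArg (coeff · 0) h).symm
    subst hΔt
    exact hΔ ⟨(linPart_eq_zero_iff Δx).mp (by simpa using h), rfl, rfl⟩
  · have hlead := congrArg (coeff · (d + 1)) h
    simp only [coeff_tamperPoly_succ, coeff_zero] at hlead
    exact mul_ne_zero hchar hΔr hlead

theorem setOf_eval_tagPoly_eq_rootSet {x Δx : Fin d → R} {Δr Δt : R}
    (h : tamperPoly x Δx Δr Δt ≠ 0) :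
    {r : R | (tagPoly (x + Δx)).eval (r + Δr) = (tagPoly x).eval r + Δt} =
      (tamperPoly x Δx Δr Δt).rootSet R := by
  ext r
  simp [mem_rootSet, h, eval_tamperPoly, sub_eq_zero]

theorem tampered_finite_and_ncard_le (hchar : ((d + 2 : ℕ) : R) ≠ 0) {x Δx : Fin d → R}
    {Δr Δt : R} (hΔ : ¬(Δx = 0 ∧ Δr = 0 ∧ Δt = 0)) :
    {r : R | (tagPoly (x + Δx)).eval (r + Δr) = (tagPoly x).eval r + Δt}.Finite ∧
      {r : R | (tagPoly (x + Δx)).eval (r + Δr) = (tagPoly x).eval r + Δt}.ncard ≤ d + 1 := by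
  rw [setOf_eval_tagPoly_eq_rootSet (tamperPoly_ne_zero hchar hΔ)]
  exact ⟨rootSet_finite _ R,
    (ncard_rootSet_le _ R).trans (natDegree_tamperPoly_le x Δx Δr Δt)⟩

end IsDomain

end AMD

open scoped Classical

theorem amd_security_general (F : Type) [Field F] (d : ℕ)
    (hchar : ∀ p : ℕ, CharP F p → ¬ p ∣ (d + 2))
    (f : (Fin d → F) → F → F)
    (hf : ∀ x r, f x r = r ^ (d + 2) + ∑ i : Fin d, x i * r ^ ((i : ℕ) + 1)) :
    ∀ (x Δx : Fin d → F) (Δr Δt : F), ¬(Δx = 0 ∧ Δr = 0 ∧ Δt = 0) →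
      ({r : F | f (x + Δx) (r + Δr) = f x r + Δt}.Finite ∧
        {r : F | f (x + Δx) (r + Δr) = f x r + Δt}.ncard ≤ d + 1) ∧
      ∀ (_ : Fintype F),
        ((Finset.univ.filter
            (fun r : F => f (x + Δx) (r + Δr) = f x r + Δt)).card : ℝ) /
            (Fintype.card F : ℝ)
          ≤ (d + 1 : ℝ) / (Fintype.card F : ℝ) := by
  intro x Δx Δr Δt hΔ
  obtain rfl : f = fun a r => (AMD.tagPoly a).eval r := by
    ext a r
    rw [hf, AMD.eval_tagPoly]
  obtain ⟨hfin, hcard⟩ :=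
    AMD.tampered_finite_and_ncard_le (natCast_ne_zero_of_forall_charP_not_dvd hchar) hΔ
  refine ⟨⟨hfin, hcard⟩, fun _ => ?_⟩
  gcongr
  rw [← Set.ncard_coe_finset, coe_filter_univ]
  exact_mod_cast hcard

/-- Security of the systematic AMD code `x ↦ (x, r, f(x,r))` with
`f(x,r) = r^{d+2} + ∑_{i=1}^d x_i r^i`, over any field whose characteristic
does not divide `d + 2`: for any nonzero offset `(Δx, Δr, Δt)` the set of seeds
`r` for which the manipulated codeword verifies has at most `d + 1` elements;
consequently, over a finite field of size `Q` with uniform `r`, the adversary's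
success probability is at most `(d+1)/Q`. -/
theorem amd_security (F : Type) [Field F] (d : ℕ) (hd : 1 ≤ d)
    (hchar : ∀ p : ℕ, CharP F p → ¬ p ∣ (d + 2))
    (f : (Fin d → F) → F → F)
    (hf : ∀ x r, f x r = r ^ (d + 2) + ∑ i : Fin d, x i * r ^ ((i : ℕ) + 1)) :
    ∀ (x Δx : Fin d → F) (Δr Δt : F), ¬(Δx = 0 ∧ Δr = 0 ∧ Δt = 0) →
      ({r : F | f (x + Δx) (r + Δr) = f x r + Δt}.Finite ∧
        {r : F | f (x + Δx) (r + Δr) = f x r + Δt}.ncard ≤ d + 1) ∧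
      ∀ (_ : Fintype F),
        ((Finset.univ.filter
            (fun r : F => f (x + Δx) (r + Δr) = f x r + Δt)).card : ℝ) /
            (Fintype.card F : ℝ)
          ≤ (d + 1 : ℝ) / (Fintype.card F : ℝ) :=
  amd_security_general F d hchar f hf
end

section
/- Let q be a prime with q > N·u, let γ be a generator of the multiplicative group F_q^*, let n ≥ 1 and let a := u·ρ_r·N be a positive integer with ρ_r ≤ 1. Define the folded Reed–Solomon based encoder Enc : F_q^n × F_q^a → (F_q^u)^N as follows: on message s ∈ F_q^n and randomness a-tuple b ∈ F_q^a, let f(X) = Σ_{i=0}^{n−1} s_i X^i + Σ_{i=0}^{a−1} b_i X^{n+i}, and set the i-th codeword symbol (1 ≤ i ≤ N) to c_i = ( f(γ^{(i−1)u}), f(γ^{(i−1)u+1}), …, f(γ^{(i−1)u+u−1}) ) ∈ F_q^u. Then for every subset S ⊆ {1,…,N} with |S| ≤ ρ_r·N and all messages s, s' ∈ F_q^n, the distribution of the restricted codeword Enc(s, B)|_S equals the distribution of Enc(s', B)|_S, where B is uniform on F_q^a; i.e., the statistical distance between the two views is 0 (perfect secrecy against reading ratio ρ_r). -/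
/-!
The view on `S` is the evaluation of `f` at the `|S| u ≤ a` nodes `γ ^ (i u + j)`, which are
distinct since `N u ≤ q - 1 = orderOf γ`, and nonzero. It is the sum of the message part,
evaluated at these nodes, and of the additive map `b ↦ (∑ᵢ bᵢ xₖ ^ (n + i))ₖ`. This map is
surjective: interpolate the targets divided by `xₖ ^ n` by a polynomial of degree `< a`.
Translating the seed by a preimage of the difference of the two message parts is then a bijection
between the seeds producing a given view under `s` and under `s'`.
-/

open Finset

open scoped Classical

open Polynomial in
theorem exists_sum_mul_pow_eq_of_injective {F ι : Type*} [Field F] [Fintype ι] {x : ι → F}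
    (hx : Function.Injective x) {a : ℕ} (hcard : Fintype.card ι ≤ a) (t : ι → F) :
    ∃ b : Fin a → F, ∀ k, ∑ i : Fin a, b i * x k ^ (i : ℕ) = t k := by
  set p := Lagrange.interpolate univ x t
  have hdeg : p.degree < a :=
    (Lagrange.degree_interpolate_lt t hx.injOn).trans_le (by simpa using hcard)
  refine ⟨fun i => p.coeff i, fun k => ?_⟩
  rw [← show p.eval (x k) = t k from Lagrange.eval_interpolate_at_node t hx.injOn (mem_univ k)]
  rcases eq_or_ne p 0 with hp | hp
  · simp [hp]
  rw [eval_eq_sum_range' ((natDegree_lt_iff_degree_lt hp).2 hdeg),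
    ← Fin.sum_univ_eq_sum_range (fun i => p.coeff i * x k ^ i)]

def shiftedPowerEval {F ι : Type*} [CommSemiring F] (x : ι → F) (n a : ℕ) :
    (Fin a → F) →+ (ι → F) where
  toFun b k := ∑ i : Fin a, b i * x k ^ (n + i : ℕ)
  map_zero' := by funext k; simp
  map_add' b b' := by funext k; simp [add_mul, sum_add_distrib]

theorem shiftedPowerEval_surjective {F ι : Type*} [Field F] [Fintype ι] {x : ι → F}
    (hx : Function.Injective x) (hx₀ : ∀ k, x k ≠ 0) (n : ℕ) {a : ℕ}
    (hcard : Fintype.card ι ≤ a) : Function.Surjective (shiftedPowerEval x n a) := by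
  intro t
  obtain ⟨b, hb⟩ := exists_sum_mul_pow_eq_of_injective hx hcard fun k => t k / x k ^ n
  refine ⟨b, funext fun k => ?_⟩
  simp only [shiftedPowerEval, AddMonoidHom.coe_mk, ZeroHom.coe_mk, pow_add,
    mul_left_comm _ (x k ^ n), ← mul_sum]
  rw [hb k, mul_div_cancel₀ _ (pow_ne_zero n (hx₀ k))]

theorem card_filter_add_eq_of_surjective {G H : Type*} [AddGroup G] [Fintype G] [AddGroup H]
    {φ : G →+ H} (hφ : Function.Surjective φ) (c c' : H) (P : H → Prop) [DecidablePred P] :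
    #{g | P (c + φ g)} = #{g | P (c' + φ g)} := by
  obtain ⟨g₀, hg₀⟩ := hφ (-c' + c)
  refine card_equiv (Equiv.addLeft g₀) fun g => ?_
  simp [hg₀, add_assoc]

theorem pow_mul_add_injective {M : Type*} [Monoid M] {x : M} {N u : ℕ}
    (hx : N * u ≤ orderOf x) :
    Function.Injective fun p : Fin N × Fin u => x ^ ((p.1 : ℕ) * u + p.2) := by
  intro p p' h
  have hlt : ∀ p : Fin N × Fin u, (p.1 : ℕ) * u + p.2 ∈ Set.Iio (orderOf x) := fun p =>
    (by simpa [mul_comm, add_comm] using (finProdFinEquiv p).isLt : _ < N * u).trans_le hx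
  apply finProdFinEquiv.injective
  ext
  simpa [mul_comm, add_comm] using pow_injOn_Iio_orderOf (hlt p) (hlt p') h

theorem frs_perfect_secrecy_general
    (q : ℕ) [Fact q.Prime]
    (N u n a : ℕ)
    (ρr : ℝ) (haeq : (a : ℝ) = (u : ℝ) * ρr * N)
    (hq : N * u < q)
    (γ : (ZMod q)ˣ) (hγ : ∀ x : (ZMod q)ˣ, x ∈ Subgroup.zpowers γ)
    (Enc : (Fin n → ZMod q) → (Fin a → ZMod q) → Fin N → Fin u → ZMod q)
    (hEnc : ∀ s b i j, Enc s b i j =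
        ∑ i' : Fin n, s i' * ((γ : ZMod q) ^ ((i : ℕ) * u + (j : ℕ))) ^ (i' : ℕ) +
        ∑ i' : Fin a, b i' * ((γ : ZMod q) ^ ((i : ℕ) * u + (j : ℕ))) ^ (n + (i' : ℕ))) :
    ∀ S : Finset (Fin N), (S.card : ℝ) ≤ ρr * N →
    ∀ s s' : Fin n → ZMod q, ∀ v : {i // i ∈ S} → Fin u → ZMod q,
      (Finset.univ.filter (fun b : Fin a → ZMod q =>
          ∀ i : {i // i ∈ S}, (fun j => Enc s b i.val j) = v i)).card =
      (Finset.univ.filter (fun b : Fin a → ZMod q =>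
          ∀ i : {i // i ∈ S}, (fun j => Enc s' b i.val j) = v i)).card := by
  intro S hS s s' v
  let x : S × Fin u → ZMod q := fun k => (γ : ZMod q) ^ ((k.1 : ℕ) * u + k.2)
  have hord : N * u ≤ orderOf (γ : ZMod q) := by
    rw [orderOf_units, orderOf_eq_card_of_forall_mem_zpowers hγ, Nat.card_eq_fintype_card,
      ZMod.card_units q]
    omega
  have hx : Function.Injective x :=
    (pow_mul_add_injective hord).comp (Subtype.val_injective.prodMap Function.injective_id)
  have hx₀ : ∀ k, x k ≠ 0 := fun k => pow_ne_zero _ γ.ne_zero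
  have hcard : Fintype.card (S × Fin u) ≤ a := by
    have : (S.card : ℝ) * u ≤ a := by
      rw [haeq]; nlinarith [(u.cast_nonneg : (0 : ℝ) ≤ u)]
    simpa using (by exact_mod_cast this : S.card * u ≤ a)
  have hview : ∀ s b (i : S) j, Enc s b i j =
      ((fun k => ∑ i : Fin n, s i * x k ^ (i : ℕ)) + shiftedPowerEval x n a b) (i, j) := by
    intro s b i j; simp [hEnc, shiftedPowerEval, x]
  have hcount := card_filter_add_eq_of_surjective (shiftedPowerEval_surjective hx hx₀ n hcard)
    (fun k => ∑ i : Fin n, s i * x k ^ (i : ℕ)) (fun k => ∑ i : Fin n, s' i * x k ^ (i : ℕ))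
    (fun w => ∀ i : S, (fun j => w (i, j)) = v i)
  simpa only [hview] using hcount

/-- Perfect secrecy of the folded Reed–Solomon based encoder: the codeword of a
message `s ∈ F_q^n` is obtained by evaluating
`f(X) = ∑ s_i X^i + ∑ b_i X^{n+i}` (with `b` the random coefficients) at the
consecutive powers of a generator `γ` of `F_q^*`, grouped into `N` blocks of
`u`.  For any set `S` of at most `ρ_r N` codeword positions, the distribution
of the view `Enc(s, B)|_S` (with `B` uniform) does not depend on `s`: the
number of seeds `b` producing any given view is the same for all messages. -/
theorem frs_perfect_secrecy
    (q : ℕ) [Fact q.Prime]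
    (N u n a : ℕ) (hn : 1 ≤ n) (ha : 0 < a)
    (ρr : ℝ) (hρr : ρr ≤ 1) (haeq : (a : ℝ) = (u : ℝ) * ρr * N)
    (hq : N * u < q)
    (γ : (ZMod q)ˣ) (hγ : ∀ x : (ZMod q)ˣ, x ∈ Subgroup.zpowers γ)
    (Enc : (Fin n → ZMod q) → (Fin a → ZMod q) → Fin N → Fin u → ZMod q)
    (hEnc : ∀ s b i j, Enc s b i j =
        ∑ i' : Fin n, s i' * ((γ : ZMod q) ^ ((i : ℕ) * u + (j : ℕ))) ^ (i' : ℕ) +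
        ∑ i' : Fin a, b i' * ((γ : ZMod q) ^ ((i : ℕ) * u + (j : ℕ))) ^ (n + (i' : ℕ))) :
    ∀ S : Finset (Fin N), (S.card : ℝ) ≤ ρr * N →
    ∀ s s' : Fin n → ZMod q, ∀ v : {i // i ∈ S} → Fin u → ZMod q,
      (Finset.univ.filter (fun b : Fin a → ZMod q =>
          ∀ i : {i // i ∈ S}, (fun j => Enc s b i.val j) = v i)).card =
      (Finset.univ.filter (fun b : Fin a → ZMod q =>
          ∀ i : {i // i ∈ S}, (fun j => Enc s' b i.val j) = v i)).card :=
  frs_perfect_secrecy_general q N u n a ρr haeq hq γ hγ Enc hEnc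
end

section
/- For all real numbers ξ, R, ρ with 0 < ξ ≤ 1/2, 0 ≤ R ≤ 1 and 0 ≤ ρ ≤ 1, the following inequality holds: 1/(1+ξ) − (1/(1+ξ)) · ( (R + 3ξ²)/(1−ξ) + ρ ) / (1 − ξ + ξ²) ≥ 1 − R − ρ − 12ξ. (With v = 1/ξ and u = 1/ξ², the left-hand side equals the folded Reed–Solomon decoding threshold v/(v+1) − (v/(v+1)) · ( (v/(v−1))·(uR+3) + uρ ) / (u − v + 1); this inequality is the key computation showing the construction's rate approaches 1 − ρ_r − ρ_w.) -/
/-- The key real-number computation in the rate analysis of the folded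
Reed–Solomon construction (with `v = 1/ξ`, `u = 1/ξ²` the left-hand side is
the FRS decoding threshold `v/(v+1) − (v/(v+1))·((v/(v−1))(uR+3)+uρ)/(u−v+1)`):
for `0 < ξ ≤ 1/2`, `0 ≤ R ≤ 1`, `0 ≤ ρ ≤ 1`,
`1/(1+ξ) − (1/(1+ξ))·((R+3ξ²)/(1−ξ)+ρ)/(1−ξ+ξ²) ≥ 1 − R − ρ − 12ξ`. -/
theorem frs_threshold_inequality
    (ξ R ρ : ℝ) (hξ0 : 0 < ξ) (hξ : ξ ≤ 1 / 2)
    (hR0 : 0 ≤ R) (hR1 : R ≤ 1) (hρ0 : 0 ≤ ρ) (hρ1 : ρ ≤ 1) :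
    1 / (1 + ξ) - (1 / (1 + ξ)) * ((R + 3 * ξ ^ 2) / (1 - ξ) + ρ) / (1 - ξ + ξ ^ 2)
      ≥ 1 - R - ρ - 12 * ξ := by
  have h1 : (0:ℝ) < 1 + ξ := by linarith
  have h2 : (0:ℝ) < 1 - ξ := by linarith
  have h3 : (0:ℝ) < 1 - ξ + ξ ^ 2 := by nlinarith
  have e : 1 / (1 + ξ) - (1 / (1 + ξ)) * ((R + 3 * ξ ^ 2) / (1 - ξ) + ρ) / (1 - ξ + ξ ^ 2)
      = ((1 - ξ) * (1 - ξ + ξ ^ 2) - ((R + 3 * ξ ^ 2) + ρ * (1 - ξ)))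
        / ((1 + ξ) * (1 - ξ) * (1 - ξ + ξ ^ 2)) := by
    field_simp
  rw [ge_iff_le, e, le_div_iff₀ (by positivity)]
  nlinarith [sq_nonneg ξ, sq_nonneg (1-2*ξ), mul_pos hξ0 hξ0, mul_nonneg hR0 hρ0, mul_nonneg (mul_nonneg hR0 hξ0.le) hξ0.le, mul_nonneg (mul_nonneg hρ0 hξ0.le) hξ0.le, mul_nonneg hρ0 hξ0.le, mul_nonneg hR0 hξ0.le, sq_nonneg (ξ*ξ), mul_nonneg (mul_nonneg hξ0.le hξ0.le) hξ0.le]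
end

section
/- For all reals ρ_r, ρ_w ≥ 0 and every ξ ∈ (0, 1/2) with ρ_r + ρ_w + ξ < 1, there exists N₀ such that for every N ≥ N₀ with ρ_r·N and ρ_w·N integers, there exist a prime q, an integer u with u ≤ 169/ξ² and q > N·u, an alphabet Σ = F_q^u (viewed as a finite abelian group), a finite message set 𝓜 with log|𝓜| ≥ (1 − ρ_r − ρ_w − ξ)·N·log|Σ|, and a code (Enc, Dec) of length N over Σ that is a (0,δ)-AWTP code for the (ρ_r,ρ_w)-AWTP channel (perfect secrecy) with decoding error probability δ ≤ ξ. Consequently, the rate 1 − ρ_r − ρ_w is achievable with perfect secrecy for the (ρ_r,ρ_w)-AWTP channel (with alphabet allowed to grow with N). -/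
/-!
Take `u = 1`, so `Σ = 𝔽_q` with `q` a prime much larger than `2 ^ N`. A codeword is the list of
values at `N` distinct points of a polynomial of degree `< a + k + 2` (`a = ρr N`) whose
coefficients are, from degree `0` up: a uniform mask `s ∈ 𝔽_q^a`, the message `m ∈ 𝔽_q^k`, a
uniform key `κ`, and the tag `mac_m(κ) = κ^(k+2) + ∑ mᵢ κ^(i+1)`. By interpolation the mask part
takes every value on any `a` points, so the reader's view is uniformly distributed whatever the
message and the key: this is perfect secrecy, and it makes the key independent of the view.

The decoder returns the unique message that agrees with the received word outside some `b = ρw N`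
positions. If it fails, the error agrees outside some `W` with `|W| ≤ b` with the codeword of a
difference `(δs, δm, δκ, δτ)`, `δm ≠ 0`, such that `mac_{m+δm}(κ+δκ) = mac_m(κ) + δτ`. Since
`N - b ≥ a + k + 2`, this difference is determined by the error and `W`, and then `κ` is a root of a
nonzero polynomial of degree `≤ k + 2`. A union bound over `W` bounds the error probability by
`2^N (k + 2) / q ≤ ξ`, and `k = N - a - b - 2` gives the rate once `ξ N ≥ 2`.
-/

open Finset

noncomputable section

open scoped Classical

namespace AWTP

/-- Statistical distance between two (finitely supported) distributions. -/
def sd {α : Type} [Fintype α] (p q : α → ℝ) : ℝ := (∑ x, |p x - q x|) / 2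

/-- A code of length `N` over alphabet `Alph`: a finite message set, a finite
seed set, a (randomized) encoder and a deterministic decoder. -/
structure Code (Alph : Type) (N : ℕ) where
  Mt : Type
  Rt : Type
  [fM : Fintype Mt]
  [fR : Fintype Rt]
  enc : Mt → Rt → Fin N → Alph
  dec : (Fin N → Alph) → Mt

attribute [instance] Code.fM Code.fR

/-- Distribution of the restriction to `S` of the encoding of a fixed message,
the seed being uniform. -/
def viewDist {R Alph : Type} [Fintype R] {N : ℕ} (enc : R → Fin N → Alph)
    (S : Finset (Fin N)) (v : {i // i ∈ S} → Alph) : ℝ :=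
  ((Finset.univ.filter (fun r : R => ∀ i : {i // i ∈ S}, enc r i.val = v i)).card : ℝ)
    / (Fintype.card R : ℝ)

/-- `ε`-secrecy for reading ratio `ρr`. -/
def Code.Secrecy {Alph : Type} {N : ℕ} [iS : Fintype Alph] (C : Code Alph N)
    (ε ρr : ℝ) : Prop :=
  ∀ S : Finset (Fin N), (S.card : ℝ) ≤ ρr * N →
    ∀ m₀ m₁ : C.Mt, sd (viewDist (C.enc m₀) S) (viewDist (C.enc m₁) S) ≤ ε

/-- `δ`-reliability against all `(ρr,ρw)`-adversaries. -/
def Code.Reliability {Alph : Type} {N : ℕ} [iS : Fintype Alph] [gS : AddCommGroup Alph]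
    (C : Code Alph N) (δ ρr ρw : ℝ) : Prop :=
  ∀ (PM : C.Mt → ℝ), (∀ m, 0 ≤ PM m) → ∑ m, PM m = 1 →
  ∀ (Sr Sw : Finset (Fin N)), (Sr.card : ℝ) ≤ ρr * N → (Sw.card : ℝ) ≤ ρw * N →
  ∀ (T : Type) [Fintype T], ∀ (PT : T → ℝ), (∀ t, 0 ≤ PT t) → ∑ t, PT t = 1 →
  ∀ (g : ({i // i ∈ Sr} → Alph) → T → Fin N → Alph),
    (∀ x t i, i ∉ Sw → g x t i = 0) →
    (∑ m, ∑ r, ∑ t, PM m * PT t / (Fintype.card C.Rt : ℝ) *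
      (if C.dec (fun i => C.enc m r i + g (fun j => C.enc m r j.val) t i) = m
        then 0 else 1)) ≤ δ

/-- Rate of a code: `log|𝓜| / (N log|Σ|)` (logs base 2). -/
def Code.rate {Alph : Type} {N : ℕ} [iS : Fintype Alph] (C : Code Alph N) : ℝ :=
  Real.logb 2 (Fintype.card C.Mt) / (N * Real.logb 2 (Fintype.card Alph))


/-- There is a code over the alphabet `F_q^u` of length `N` with perfect
secrecy, reliability `ξ`, and rate at least `1 - ρr - ρw - ξ`. -/
def GoodCode (ρr ρw ξ : ℝ) (N q u : ℕ) [NeZero q] : Prop :=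
  ∃ C : Code (Fin u → ZMod q) N,
    2 ≤ Fintype.card C.Mt ∧
    (1 - ρr - ρw - ξ) * N * Real.logb 2 (Fintype.card (Fin u → ZMod q)) ≤
      Real.logb 2 (Fintype.card C.Mt) ∧
    C.Secrecy 0 ρr ∧ C.Reliability ξ ρr ρw

namespace Code

variable {A : Type} {N : ℕ} [Fintype A] (C : Code A N)

theorem secrecy_zero_of_viewDist_eq {ρr : ℝ}
    (h : ∀ S : Finset (Fin N), (S.card : ℝ) ≤ ρr * N → ∀ m₀ m₁ : C.Mt,
      viewDist (C.enc m₀) S = viewDist (C.enc m₁) S) :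
    C.Secrecy 0 ρr := by
  intro S hS m₀ m₁
  simp [h S hS m₀ m₁, sd]

theorem reliability_of_error_prob_le [AddCommGroup A] {δ ρr ρw : ℝ}
    (h : ∀ Sr Sw : Finset (Fin N), (Sr.card : ℝ) ≤ ρr * N → (Sw.card : ℝ) ≤ ρw * N →
      ∀ (m : C.Mt) (G : ({i // i ∈ Sr} → A) → Fin N → A), (∀ x i, i ∉ Sw → G x i = 0) →
      (#{r | C.dec (fun i => C.enc m r i + G (fun j => C.enc m r j.val) i) ≠ m} : ℝ)
        / Fintype.card C.Rt ≤ δ) :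
    C.Reliability δ ρr ρw := by
  intro PM hPM hPM1 Sr Sw hSr hSw T _ PT hPT hPT1 g hg
  calc _ = ∑ m, ∑ t, PM m * PT t *
        ((#{r | C.dec (fun i => C.enc m r i + g (fun j => C.enc m r j.val) t i) ≠ m} : ℝ)
          / Fintype.card C.Rt) := by
        refine sum_congr rfl fun m _ => ?_
        rw [sum_comm]
        refine sum_congr rfl fun t _ => ?_
        rw [card_filter, Nat.cast_sum, sum_div, mul_sum]
        refine sum_congr rfl fun r _ => ?_
        simp only [ne_eq, ite_not]
        split_ifs <;> simp [div_eq_mul_inv, mul_assoc]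
    _ ≤ ∑ m, ∑ t, PM m * PT t * δ := by
        gcongr with m _ t _
        · exact mul_nonneg (hPM m) (hPT t)
        · exact h Sr Sw hSr hSw m (fun x => g x t) fun x i hi => hg x t i hi
    _ = δ := by simp [← sum_mul, ← mul_sum, hPT1, hPM1]

end Code

theorem card_filter_prod_eq_sum {M K : Type*} [Fintype M] [Fintype K] (P : M × K → Prop)
    [DecidablePred P] :
    #{r | P r} = ∑ κ, #{s | P (s, κ)} := by
  simp only [card_filter, Fintype.sum_prod_type_right]

theorem card_filter_prod_le_of_card_fiber_eq {M K V : Type*} [Fintype M] [Fintype K] [Fintype V]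
    [DecidableEq V] (view : M → K → V) {c : ℕ} (hc : ∀ κ v, #{s | view s κ = v} = c)
    (Bad : V → K → Prop) [DecidableRel Bad] {B : ℕ} (hB : ∀ v, #{κ | Bad v κ} ≤ B) :
    #{r : M × K | Bad (view r.1 r.2) r.2} ≤ B * (Fintype.card V * c) := by
  calc #{r : M × K | Bad (view r.1 r.2) r.2}
      = ∑ κ, ∑ v, if Bad v κ then c else 0 := by
        rw [card_filter, Fintype.sum_prod_type_right]
        refine sum_congr rfl fun κ _ => ?_
        rw [← sum_fiberwise univ (view · κ)]
        refine sum_congr rfl fun v _ => ?_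
        split_ifs with hv
        · rw [← hc κ v, card_eq_sum_ones]
          exact sum_congr rfl fun s hs => by simp_all
        · exact sum_eq_zero fun s hs => by simp_all
    _ = ∑ v, #{κ | Bad v κ} * c := by
        rw [sum_comm]
        simp only [← sum_filter, sum_const, smul_eq_mul]
    _ ≤ ∑ _v : V, B * c := by gcongr with v; exact hB v
    _ = B * (Fintype.card V * c) := by
        rw [sum_const, card_univ, smul_eq_mul]
        ring

open Polynomial

section Polynomials

variable {F : Type*} [Field F]

theorem ofFn_toFn_of_degree_lt {a : ℕ} {p : F[X]} (hp : p.degree < a) :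
    ofFn a (toFn a p) = p := by
  ext j
  by_cases hj : j < a
  · simp [hj, toFn]
  · rw [ofFn_coeff_eq_zero_of_ge _ (not_lt.mp hj), coeff_eq_zero_of_degree_lt]
    exact hp.trans_le (by exact_mod_cast not_lt.mp hj)

theorem surjective_eval_ofFn {ι : Type*} {α : ι → F} (hα : Function.Injective α)
    {S : Finset ι} {a : ℕ} (hS : S.card ≤ a) :
    Function.Surjective fun s : Fin a → F => fun i : S => (ofFn a s).eval (α i) := by
  classical
  intro w
  let p := Lagrange.interpolate S α fun i => if h : i ∈ S then w ⟨i, h⟩ else 0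
  have hp : p.degree < a :=
    (Lagrange.degree_interpolate_lt _ hα.injOn).trans_le (by exact_mod_cast hS)
  refine ⟨toFn a p, funext fun i => ?_⟩
  show (ofFn a (toFn a p)).eval (α i) = w i
  rw [ofFn_toFn_of_degree_lt hp, Lagrange.eval_interpolate_at_node _ hα.injOn i.2]
  simp

variable {k : ℕ}

theorem natDegree_X_mul_ofFn_le (v : Fin k → F) : (X * ofFn k v).natDegree ≤ k := by
  rw [natDegree_le_iff_coeff_eq_zero]
  intro j hj
  obtain ⟨j, rfl⟩ : ∃ i, j = i + 1 := ⟨j - 1, by omega⟩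
  rw [coeff_X_mul, ofFn_coeff_eq_zero_of_ge _ (by omega)]

theorem coeff_X_mul_ofFn (v : Fin k → F) (i : Fin k) : (X * ofFn k v).coeff (i + 1) = v i := by
  rw [coeff_X_mul, ofFn_coeff_eq_val_of_lt _ i.2]

def macPoly (m : Fin k → F) : F[X] := X ^ (k + 2) + X * ofFn k m

theorem natDegree_macPoly_le (m : Fin k → F) : (macPoly m).natDegree ≤ k + 2 :=
  natDegree_add_le_of_degree_le (natDegree_X_pow_le _)
    ((natDegree_X_mul_ofFn_le m).trans (by omega))

theorem coeff_macPoly_succ (m : Fin k → F) : (macPoly m).coeff (k + 1) = 0 := by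
  rw [macPoly, coeff_add, coeff_X_pow, if_neg (by omega), zero_add,
    coeff_eq_zero_of_natDegree_lt ((natDegree_X_mul_ofFn_le m).trans_lt (Nat.lt_succ_self k))]

def forgeryPoly (m δm : Fin k → F) (δκ δτ : F) : F[X] :=
  taylor δκ (macPoly (m + δm)) - macPoly m - C δτ

theorem eval_forgeryPoly (m δm : Fin k → F) (δκ δτ κ : F) :
    (forgeryPoly m δm δκ δτ).eval κ
      = (macPoly (m + δm)).eval (κ + δκ) - (macPoly m).eval κ - δτ := by
  simp [forgeryPoly, taylor_eval]

theorem natDegree_forgeryPoly_le (m δm : Fin k → F) (δκ δτ : F) :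
    (forgeryPoly m δm δκ δτ).natDegree ≤ k + 2 := by
  refine (natDegree_sub_le _ _).trans (max_le ((natDegree_sub_le _ _).trans (max_le ?_
    (natDegree_macPoly_le m))) (by rw [natDegree_C]; omega))
  rw [natDegree_taylor]
  exact natDegree_macPoly_le _

theorem coeff_forgeryPoly_succ (m δm : Fin k → F) (δκ δτ : F) :
    (forgeryPoly m δm δκ δτ).coeff (k + 1) = δκ * (k + 2) := by
  have hX : (taylor δκ (X * ofFn k (m + δm))).coeff (k + 1) = 0 :=
    coeff_eq_zero_of_natDegree_lt <| by
      rw [natDegree_taylor]; exact (natDegree_X_mul_ofFn_le _).trans_lt (Nat.lt_succ_self k)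
  rw [forgeryPoly, coeff_sub, coeff_sub, coeff_macPoly_succ, coeff_C, if_neg (by omega), macPoly,
    map_add, coeff_add, hX, taylor_X_pow, coeff_X_add_C_pow, Nat.choose_succ_self_right,
    show k + 2 - (k + 1) = 1 by omega]
  push_cast
  ring

theorem forgeryPoly_ne_zero (hk : ((k + 2 : ℕ) : F) ≠ 0) {m δm : Fin k → F} (hδm : δm ≠ 0)
    (δκ δτ : F) : forgeryPoly m δm δκ δτ ≠ 0 := by
  intro h
  have hδκ : δκ = 0 := by
    have := coeff_forgeryPoly_succ m δm δκ δτ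
    rw [h, coeff_zero] at this
    push_cast at hk
    exact (mul_eq_zero.mp this.symm).resolve_right hk
  obtain ⟨i, hi⟩ := Function.ne_iff.mp hδm
  have hcoeff := congrArg (coeff · (i + 1)) h
  simp only [forgeryPoly, hδκ, taylor_zero, macPoly, map_add, mul_add, coeff_sub, coeff_add,
    coeff_X_mul_ofFn, coeff_C_succ, coeff_zero] at hcoeff
  exact hi (by rw [Pi.zero_apply]; linear_combination hcoeff)

end Polynomials

section PolyCode

variable {F : Type} [Field F] {N a k : ℕ}

def codePoly (s : Fin a → F) (m : Fin k → F) (κ τ : F) : F[X] :=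
  ofFn a s + (ofFn k m + (C κ + C τ * X) * X ^ k) * X ^ a

theorem codePoly_sub (s s' : Fin a → F) (m m' : Fin k → F) (κ κ' τ τ' : F) :
    codePoly (s - s') (m - m') (κ - κ') (τ - τ') = codePoly s m κ τ - codePoly s' m' κ' τ' := by
  simp only [codePoly, map_sub]
  ring

theorem codePoly_eq_ofFn_add (s : Fin a → F) (m : Fin k → F) (κ τ : F) :
    codePoly s m κ τ = ofFn a s + codePoly (0 : Fin a → F) m κ τ := by
  simp [codePoly]

theorem coeff_codePoly_above_mask (s : Fin a → F) (m : Fin k → F) (κ τ : F) (j : ℕ) :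
    (codePoly s m κ τ).coeff (j + a) = (ofFn k m + (C κ + C τ * X) * X ^ k).coeff j := by
  rw [codePoly, coeff_add, coeff_mul_X_pow, ofFn_coeff_eq_zero_of_ge _ (by omega), zero_add]

theorem coeff_codePoly_msg (s : Fin a → F) (m : Fin k → F) (κ τ : F) (i : Fin k) :
    (codePoly s m κ τ).coeff (i + a) = m i := by
  simp [coeff_codePoly_above_mask, coeff_mul_X_pow', ofFn_coeff_eq_val_of_lt _ i.2]

theorem coeff_codePoly_key (s : Fin a → F) (m : Fin k → F) (κ τ : F) :
    (codePoly s m κ τ).coeff (k + a) = κ := by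
  simp [coeff_codePoly_above_mask, coeff_mul_X_pow']

theorem coeff_codePoly_tag (s : Fin a → F) (m : Fin k → F) (κ τ : F) :
    (codePoly s m κ τ).coeff (k + 1 + a) = τ := by
  simp [coeff_codePoly_above_mask, coeff_mul_X_pow']

theorem natDegree_codePoly_le (s : Fin a → F) (m : Fin k → F) (κ τ : F) :
    (codePoly s m κ τ).natDegree ≤ a + k + 1 := by
  rw [natDegree_le_iff_coeff_eq_zero]
  intro j hj
  obtain ⟨j, rfl⟩ : ∃ i, j = i + a := ⟨j - a, by omega⟩
  simp [coeff_codePoly_above_mask, coeff_mul_X_pow', coeff_X, coeff_C,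
    ofFn_coeff_eq_zero_of_ge _ (show k ≤ j by omega), show j - k ≠ 0 by omega,
    show 1 ≠ j - k by omega]

theorem eq_of_codePoly_eq {s s' : Fin a → F} {m m' : Fin k → F} {κ κ' τ τ' : F}
    (h : codePoly s m κ τ = codePoly s' m' κ' τ') : m = m' ∧ κ = κ' ∧ τ = τ' := by
  refine ⟨funext fun i => ?_, ?_, ?_⟩
  · rw [← coeff_codePoly_msg s m κ τ, h, coeff_codePoly_msg]
  · rw [← coeff_codePoly_key s m κ τ, h, coeff_codePoly_key]
  · rw [← coeff_codePoly_tag s m κ τ, h, coeff_codePoly_tag]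

end PolyCode

section Decoding

variable {F : Type} [Field F] {N k : ℕ} (α : Fin N → F) (a b : ℕ)

def encodePoly (m : Fin k → F) (s : Fin a → F) (κ : F) : F[X] :=
  codePoly s m κ ((macPoly m).eval κ)

def IsCandidate (y : Fin N → F) (m : Fin k → F) : Prop :=
  ∃ W : Finset (Fin N), W.card ≤ b ∧
    ∃ (s : Fin a → F) (κ : F), ∀ i ∉ W, (encodePoly a m s κ).eval (α i) = y i

def decode (y : Fin N → F) : Fin k → F :=
  if h : ∃! m, IsCandidate α a b y m then h.exists.choose else 0

def Forges (m : Fin k → F) (e : Fin N → F) (W : Finset (Fin N)) (κ : F) : Prop :=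
  ∃ (δs : Fin a → F) (δm : Fin k → F) (δκ δτ : F), δm ≠ 0 ∧
    (∀ i ∉ W, (codePoly δs δm δκ δτ).eval (α i) = e i) ∧
    (macPoly (m + δm)).eval (κ + δκ) = (macPoly m).eval κ + δτ

variable {α a b}

theorem decode_eq {y : Fin N → F} {m : Fin k → F} (hm : IsCandidate α a b y m)
    (huniq : ∀ m', IsCandidate α a b y m' → m' = m) : decode α a b y = m := by
  have h : ∃! m, IsCandidate α a b y m := ⟨m, hm, huniq⟩
  rw [decode, dif_pos h]
  exact huniq _ h.exists.choose_spec

theorem exists_forges_of_decode_ne {m : Fin k → F} {s : Fin a → F} {κ : F} {e : Fin N → F}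
    {Sw : Finset (Fin N)} (hSw : Sw.card ≤ b) (he : ∀ i ∉ Sw, e i = 0)
    (herr : decode α a b (fun i => (encodePoly a m s κ).eval (α i) + e i) ≠ m) :
    ∃ W : Finset (Fin N), W.card ≤ b ∧ Forges α a m e W κ := by
  have hm : IsCandidate α a b (fun i => (encodePoly a m s κ).eval (α i) + e i) m :=
    ⟨Sw, hSw, s, κ, fun i hi => by simp [he i hi]⟩
  obtain ⟨m', ⟨W, hW, s', κ', hagree⟩, hne⟩ : ∃ m', IsCandidate α a b _ m' ∧ m' ≠ m := by
    by_contra! h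
    exact herr (decode_eq hm h)
  refine ⟨W, hW, s' - s, m' - m, κ' - κ, (macPoly m').eval κ' - (macPoly m).eval κ,
    sub_ne_zero.mpr hne, fun i hi => ?_, by simp⟩
  rw [codePoly_sub, eval_sub, ← encodePoly, ← encodePoly, hagree i hi, add_sub_cancel_left]

theorem card_forges_le [Fintype F] (hα : Function.Injective α) (hk : ((k + 2 : ℕ) : F) ≠ 0)
    (m : Fin k → F) (e : Fin N → F) {W : Finset (Fin N)} (hW : a + k + 2 + W.card ≤ N) :
    #{κ | Forges α a m e W κ} ≤ k + 2 := by
  by_cases hex : ∃ κ₀, Forges α a m e W κ₀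
  · obtain ⟨-, δs₀, δm₀, δκ₀, δτ₀, hδm₀, hagree₀, -⟩ := hex
    have hU : a + k + 2 ≤ (univ \ W).card := by
      rw [card_sdiff_of_subset (subset_univ W), card_univ, Fintype.card_fin]
      omega
    have hdeg (s : Fin a → F) (m : Fin k → F) (κ τ : F) :
        (codePoly s m κ τ).degree < (univ \ W).card :=
      degree_le_natDegree.trans_lt
        (by exact_mod_cast (natDegree_codePoly_le s m κ τ).trans_lt (by omega))
    have hroot : ∀ κ, Forges α a m e W κ → (forgeryPoly m δm₀ δκ₀ δτ₀).eval κ = 0 := by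
      rintro κ ⟨δs, δm, δκ, δτ, -, hagree, hmac⟩
      have hcode := eq_of_degrees_lt_of_eval_index_eq (univ \ W) hα.injOn (hdeg ..) (hdeg ..)
        fun i hi => (hagree i (mem_sdiff.1 hi).2).trans (hagree₀ i (mem_sdiff.1 hi).2).symm
      obtain ⟨rfl, rfl, rfl⟩ := eq_of_codePoly_eq hcode
      rw [eval_forgeryPoly, hmac]
      ring
    calc #{κ | Forges α a m e W κ}
        ≤ (forgeryPoly m δm₀ δκ₀ δτ₀).natDegree :=
          card_le_degree_of_subset_roots fun κ hκ =>
            (mem_roots (forgeryPoly_ne_zero hk hδm₀ δκ₀ δτ₀)).2 (hroot κ (mem_filter.1 hκ).2)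
      _ ≤ k + 2 := natDegree_forgeryPoly_le m δm₀ δκ₀ δτ₀
  · simp [show ∀ κ, ¬ Forges α a m e W κ from fun κ h => hex ⟨κ, h⟩]

end Decoding

section Code

variable {A F : Type} [AddCommGroup A] [Field F] [Fintype F] {N a k : ℕ}

def polyEnc (φ : A ≃+ F) (α : Fin N → F) (a : ℕ) (m : Fin k → F) (r : (Fin a → F) × F)
    (i : Fin N) : A :=
  φ.symm ((encodePoly a m r.1 r.2).eval (α i))

def polyCode (φ : A ≃+ F) (α : Fin N → F) (a k b : ℕ) : Code A N where
  Mt := Fin k → F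
  Rt := (Fin a → F) × F
  enc := polyEnc φ α a
  dec y := decode α a b fun i => φ (y i)

variable {φ : A ≃+ F} {α : Fin N → F}

theorem card_view_fiber_eq (hα : Function.Injective α) {S : Finset (Fin N)} (hS : S.card ≤ a)
    (m : Fin k → F) (κ : F) (v : S → A) :
    #{s : Fin a → F | ∀ i : S, polyEnc φ α a m (s, κ) i = v i}
      = #{s : Fin a → F | ∀ i : S, (ofFn a s).eval (α i) = 0} := by
  let f : (Fin a → F) →+ (S → F) :=
    ((LinearMap.pi fun i : S => leval (α i)).comp (ofFn a)).toAddMonoidHom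
  have hf : Function.Surjective f := surjective_eval_ofFn hα hS
  have hfib := AddMonoidHom.card_fiber_eq_of_mem_range f
    (hf fun i => φ (v i) - (encodePoly a m 0 κ).eval (α i)) (hf 0)
  convert hfib using 2
  · ext s
    simp [f, funext_iff, polyEnc, encodePoly, codePoly_eq_ofFn_add s, AddEquiv.symm_apply_eq,
      eq_sub_iff_add_eq]
  · simp [f, funext_iff]

variable [Fintype A] {b : ℕ}

theorem polyCode_secrecy (hα : Function.Injective α) {ρr : ℝ} (ha : ρr * N ≤ a) :
    (polyCode φ α a k b).Secrecy 0 ρr := by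
  refine Code.secrecy_zero_of_viewDist_eq _ fun S hS m₀ m₁ => funext fun v => ?_
  have hSa : S.card ≤ a := by exact_mod_cast hS.trans ha
  have hcount (m : Fin k → F) :
      #{r : (Fin a → F) × F | ∀ i : S, polyEnc φ α a m r i = v i}
        = Fintype.card F * #{s : Fin a → F | ∀ i : S, (ofFn a s).eval (α i) = 0} := by
    rw [card_filter_prod_eq_sum]
    simp only [card_view_fiber_eq hα hSa, sum_const, card_univ, smul_eq_mul]
  exact congrArg (fun n : ℕ => (n : ℝ) / Fintype.card (polyCode φ α a k b).Rt)
    ((hcount m₀).trans (hcount m₁).symm)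

theorem card_decode_error_le (hα : Function.Injective α) (hk : ((k + 2 : ℕ) : F) ≠ 0)
    (hN : a + k + 2 + b ≤ N) {Sr Sw : Finset (Fin N)} (hSr : Sr.card ≤ a) (hSw : Sw.card ≤ b)
    (m : Fin k → F) (G : (Sr → A) → Fin N → A) (hG : ∀ x, ∀ i ∉ Sw, G x i = 0) :
    #{r | (polyCode φ α a k b).dec (fun i => (polyCode φ α a k b).enc m r i +
        G (fun j => (polyCode φ α a k b).enc m r j) i) ≠ m}
      ≤ 2 ^ N * ((k + 2) * Fintype.card (Fin a → F)) := by
  let view (s : Fin a → F) (κ : F) : Sr → A := fun j => polyEnc φ α a m (s, κ) j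
  set c := #{s : Fin a → F | ∀ i : Sr, (ofFn a s).eval (α i) = 0}
  have hfib (κ : F) (v : Sr → A) : #{s | view s κ = v} = c := by
    simp only [view, funext_iff]
    exact card_view_fiber_eq hα hSr m κ v
  have hc : Fintype.card (Sr → A) * c = Fintype.card (Fin a → F) := by
    have := card_eq_sum_card_fiberwise (f := (view · 0)) (s := univ) (t := univ) (by simp)
    simpa [hfib, mul_comm] using this.symm
  let E (v : Sr → A) (i : Fin N) : F := φ (G v i)
  let small : Finset (Finset (Fin N)) := {W | W.card ≤ b}
  calc _ ≤ #(small.biUnion fun W =>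
          {r : (polyCode φ α a k b).Rt | Forges α a m (E (view r.1 r.2)) W r.2}) := by
        refine card_le_card fun r hr => ?_
        obtain ⟨W, hW, hforge⟩ := exists_forges_of_decode_ne hSw (e := E (view r.1 r.2))
          (fun i hi => by simp [E, hG _ i hi])
          (by simpa [polyCode, polyEnc, E, view] using (mem_filter.1 hr).2)
        exact mem_biUnion.2 ⟨W, mem_filter.2 ⟨mem_univ _, hW⟩, mem_filter.2 ⟨mem_univ _, hforge⟩⟩
    _ ≤ ∑ W ∈ small, #{r : (polyCode φ α a k b).Rt | Forges α a m (E (view r.1 r.2)) W r.2} :=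
        card_biUnion_le
    _ ≤ ∑ W ∈ small, (k + 2) * (Fintype.card (Sr → A) * c) :=
        sum_le_sum fun W hW => card_filter_prod_le_of_card_fiber_eq view hfib
          (fun v κ => Forges α a m (E v) W κ) fun v =>
            card_forges_le hα hk m (E v) (by have := (mem_filter.1 hW).2; omega)
    _ ≤ 2 ^ N * ((k + 2) * Fintype.card (Fin a → F)) := by
        rw [sum_const, smul_eq_mul, hc]
        gcongr
        calc #small ≤ #(univ : Finset (Finset (Fin N))) := card_filter_le _ _
          _ = 2 ^ N := by simp

theorem polyCode_reliability (hα : Function.Injective α) (hk : ((k + 2 : ℕ) : F) ≠ 0)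
    (hN : a + k + 2 + b ≤ N) {ρr ρw ξ : ℝ} (ha : ρr * N ≤ a) (hb : ρw * N ≤ b)
    (hξ : 2 ^ N * (k + 2 : ℝ) ≤ ξ * Fintype.card F) :
    (polyCode φ α a k b).Reliability ξ ρr ρw := by
  refine Code.reliability_of_error_prob_le _ fun Sr Sw hSr hSw m G hG => ?_
  have herr := card_decode_error_le (φ := φ) hα hk hN (by exact_mod_cast hSr.trans ha)
    (by exact_mod_cast hSw.trans hb) m G hG
  have hR : (Fintype.card (polyCode φ α a k b).Rt : ℝ)
      = Fintype.card (Fin a → F) * Fintype.card F := by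
    exact_mod_cast Fintype.card_prod _ _
  rw [hR, div_le_iff₀ (by positivity)]
  calc _ ≤ ((2 ^ N * ((k + 2) * Fintype.card (Fin a → F)) : ℕ) : ℝ) := by exact_mod_cast herr
    _ = 2 ^ N * (k + 2 : ℝ) * Fintype.card (Fin a → F) := by push_cast; ring
    _ ≤ ξ * Fintype.card F * Fintype.card (Fin a → F) := by gcongr
    _ = ξ * (Fintype.card (Fin a → F) * Fintype.card F) := by ring

end Code

theorem injective_natCast_fin_zmod {N q : ℕ} (hNq : N ≤ q) :
    Function.Injective fun i : Fin N => ((i : ℕ) : ZMod q) := by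
  intro i j h
  simp only [ZMod.natCast_eq_natCast_iff', Nat.mod_eq_of_lt (i.2.trans_le hNq),
    Nat.mod_eq_of_lt (j.2.trans_le hNq)] at h
  exact Fin.ext h

theorem goodCode_polyCode {ρr ρw ξ : ℝ} {N q a k b : ℕ} [Fact q.Prime] (hN : a + k + 2 + b ≤ N)
    (hNq : N < q) (hk : 1 ≤ k) (ha : ρr * N ≤ a) (hb : ρw * N ≤ b)
    (hrate : (1 - ρr - ρw - ξ) * N ≤ k) (hξ : 2 ^ N * (k + 2 : ℝ) ≤ ξ * q) :
    GoodCode ρr ρw ξ N q 1 := by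
  have hα := injective_natCast_fin_zmod hNq.le
  have hk2 : ((k + 2 : ℕ) : ZMod q) ≠ 0 :=
    (ZMod.natCast_eq_zero_iff _ _).not.mpr (Nat.not_dvd_of_pos_of_lt (by omega) (by omega))
  have hq := (Fact.out : q.Prime)
  refine ⟨polyCode (AddEquiv.piUnique fun _ : Fin 1 => ZMod q) _ a k b, ?_, ?_,
    polyCode_secrecy hα ha, polyCode_reliability hα hk2 hN ha hb (by simpa using hξ)⟩
  · show 2 ≤ Fintype.card (Fin k → ZMod q)
    rw [Fintype.card_fun, ZMod.card, Fintype.card_fin]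
    exact hq.two_le.trans (Nat.le_self_pow (by omega) q)
  · show _ ≤ Real.logb 2 (Fintype.card (Fin k → ZMod q))
    simp only [Fintype.card_fun, ZMod.card, Fintype.card_fin, pow_one, Nat.cast_pow,
      Real.logb_pow]
    gcongr
    exact Real.logb_nonneg one_lt_two (by exact_mod_cast hq.one_lt.le)

theorem capacity_achieving_construction_general
    (ρr ρw ξ : ℝ)
    (hξ0 : 0 < ξ) (hξ : ξ < 1 / 2) (hsum : ρr + ρw + ξ < 1) :
    ∃ N₀ : ℕ, ∀ N : ℕ, N₀ ≤ N →
      (∃ a : ℕ, (a : ℝ) = ρr * N) → (∃ b : ℕ, (b : ℝ) = ρw * N) →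
      ∃ q u : ℕ, ∃ hq : q.Prime,
        (u : ℝ) ≤ 169 / ξ ^ 2 ∧ N * u < q ∧
        @GoodCode ρr ρw ξ N q u ⟨hq.pos.ne'⟩ := by
  refine ⟨⌈2 / ξ⌉₊, fun N hN ⟨a, ha⟩ ⟨b, hb⟩ => ?_⟩
  have hξN : 2 ≤ ξ * N := (div_le_iff₀' hξ0).mp (Nat.ceil_le.mp hN)
  have hab : a + b + 2 < N := by
    have : (a + b + 2 : ℝ) < N := by rw [ha, hb]; nlinarith
    exact_mod_cast this
  obtain ⟨k, hkN⟩ : ∃ k, a + k + 2 + b = N := ⟨N - (a + b + 2), by omega⟩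
  have hk : (k : ℝ) = N - a - b - 2 := by
    have : ((a + k + 2 + b : ℕ) : ℝ) = N := congrArg _ hkN
    push_cast at this
    linarith
  obtain ⟨q, hq_ge, hq⟩ := Nat.exists_infinite_primes (⌈2 ^ N * (N + 2) / ξ⌉₊ + N + 1)
  have hqξ : 2 ^ N * (k + 2 : ℝ) ≤ ξ * q := by
    have hceil : 2 ^ N * (N + 2 : ℝ) / ξ ≤ q :=
      (Nat.le_ceil _).trans (by exact_mod_cast (show ⌈2 ^ N * ((N : ℝ) + 2) / ξ⌉₊ ≤ q by omega))
    rw [div_le_iff₀' hξ0] at hceil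
    refine le_trans ?_ hceil
    gcongr
    linarith
  have := Fact.mk hq
  refine ⟨q, 1, hq, ?_, by omega, goodCode_polyCode (by omega) (by omega) (by omega) ha.ge hb.ge
    (by rw [hk]; linarith) hqξ⟩
  rw [Nat.cast_one, le_div_iff₀ (by positivity)]
  nlinarith

/-- Explicit construction: for all `ρr, ρw ≥ 0` and `ξ ∈ (0, 1/2)` with
`ρr + ρw + ξ < 1`, for all large enough `N` making `ρr N` and `ρw N` integers,
there are a prime `q > N u` and a folding parameter `u ≤ 169/ξ²` such that over
the alphabet `Σ = F_q^u` there is a perfectly secret `(0,δ)`-AWTP code for the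
`(ρr,ρw)`-AWTP channel with `δ ≤ ξ` and `log|𝓜| ≥ (1-ρr-ρw-ξ) N log|Σ|`;
hence the rate `1 - ρr - ρw` is achievable with perfect secrecy. -/
theorem capacity_achieving_construction
    (ρr ρw ξ : ℝ) (hρr : 0 ≤ ρr) (hρw : 0 ≤ ρw)
    (hξ0 : 0 < ξ) (hξ : ξ < 1 / 2) (hsum : ρr + ρw + ξ < 1) :
    ∃ N₀ : ℕ, ∀ N : ℕ, N₀ ≤ N →
      (∃ a : ℕ, (a : ℝ) = ρr * N) → (∃ b : ℕ, (b : ℝ) = ρw * N) →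
      ∃ q u : ℕ, ∃ hq : q.Prime,
        (u : ℝ) ≤ 169 / ξ ^ 2 ∧ N * u < q ∧
        @GoodCode ρr ρw ξ N q u ⟨hq.pos.ne'⟩ :=
  capacity_achieving_construction_general ρr ρw ξ hξ0 hξ hsum
end AWTP
end
end

section
/- Let N, t ∈ ℕ with t ≤ N and set ρ := t/N, and let V be a finite abelian group with |V| ≥ 2. A pair (Enc, Dec) with Enc : 𝓜 × 𝓡 → V^N and Dec : V^N → 𝓜 is a 1-round (ε,δ)-SMT protocol over N wires against t-threshold adversaries if and only if, taking alphabet Σ := V, it is an (ε,δ)-restricted-AWTP code of length N with reading/writing ratio ρ (i.e., it has ε-secrecy for reading ratio ρ and δ-reliability against all restricted ρ-adversaries, which read and additively corrupt the same coordinate set). In particular, replacement of the symbols on a set T by values computed from the observed symbols on T is equivalent to adding an error vector supported on T computed from the same observation, and the two secrecy conditions coincide. -/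
open Finset

noncomputable section

open scoped Classical

namespace AWTP

/-- Replace the coordinates of `c` lying in `T` by the values `w`. -/
def replaceOn {V : Type} {N : ℕ} (T : Finset (Fin N)) (c : Fin N → V)
    (w : {i // i ∈ T} → V) : Fin N → V :=
  fun i => if h : i ∈ T then w ⟨i, h⟩ else c i

/-- `ε`-secrecy of a 1-round SMT protocol against `t`-threshold adversaries. -/
def Code.SMTSecrecy {V : Type} {N : ℕ} [iV : Fintype V] (C : Code V N)
    (ε : ℝ) (t : ℕ) : Prop :=
  ∀ T : Finset (Fin N), T.card ≤ t →
    ∀ m₀ m₁ : C.Mt, sd (viewDist (C.enc m₀) T) (viewDist (C.enc m₁) T) ≤ ε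

/-- `δ`-reliability of a 1-round SMT protocol against `t`-threshold
adversaries, which replace the symbols on a corrupted set `T` by values
computed from the observed symbols on `T`. -/
def Code.SMTReliability {V : Type} {N : ℕ} [iV : Fintype V] (C : Code V N)
    (δ : ℝ) (t : ℕ) : Prop :=
  ∀ (PM : C.Mt → ℝ), (∀ m, 0 ≤ PM m) → ∑ m, PM m = 1 →
  ∀ (T : Finset (Fin N)), T.card ≤ t →
  ∀ (𝓣 : Type) [Fintype 𝓣], ∀ (PT : 𝓣 → ℝ), (∀ τ, 0 ≤ PT τ) → ∑ τ, PT τ = 1 →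
  ∀ (h : ({i // i ∈ T} → V) → 𝓣 → ({i // i ∈ T} → V)),
    (∑ m, ∑ r, ∑ τ, PM m * PT τ / (Fintype.card C.Rt : ℝ) *
      (if C.dec (replaceOn T (C.enc m r) (h (fun i => C.enc m r i.val) τ)) = m
        then 0 else 1)) ≤ δ

/-- `δ`-reliability against all restricted `ρ`-adversaries, which read and
(additively) write on the same coordinate set `S`. -/
def Code.RestrictedReliability {Alph : Type} {N : ℕ} [iS : Fintype Alph]
    [gS : AddCommGroup Alph] (C : Code Alph N) (δ ρ : ℝ) : Prop :=
  ∀ (PM : C.Mt → ℝ), (∀ m, 0 ≤ PM m) → ∑ m, PM m = 1 →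
  ∀ (S : Finset (Fin N)), (S.card : ℝ) ≤ ρ * N →
  ∀ (T : Type) [Fintype T], ∀ (PT : T → ℝ), (∀ t, 0 ≤ PT t) → ∑ t, PT t = 1 →
  ∀ (g : ({i // i ∈ S} → Alph) → T → Fin N → Alph),
    (∀ x t i, i ∉ S → g x t i = 0) →
    (∑ m, ∑ r, ∑ t, PM m * PT t / (Fintype.card C.Rt : ℝ) *
      (if C.dec (fun i => C.enc m r i + g (fun j => C.enc m r j.val) t i) = m
        then 0 else 1)) ≤ δ

/-! Both adversaries see the same `c|_T`, so each simulates the other: overwriting `T` with `w`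
is adding the error `w - c` supported on `T`, and adding an error `e` supported on `T` is
overwriting `T` with `c + e`. The size constraints `|T| ≤ t` and `|T| ≤ ρN` agree for
`ρ = t/N`. -/

lemma replaceOn_add_of_support {V : Type} [AddCommGroup V] {N : ℕ} {T : Finset (Fin N)}
    (c e : Fin N → V) (he : ∀ i, i ∉ T → e i = 0) :
    replaceOn T c (fun i => c i.val + e i.val) = fun i => c i + e i := by
  funext i
  by_cases hi : i ∈ T <;> simp [replaceOn, hi, he]

lemma replaceOn_eq_add {V : Type} [AddCommGroup V] {N : ℕ} (T : Finset (Fin N))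
    (c : Fin N → V) (w : {i // i ∈ T} → V) :
    replaceOn T c w = fun i => c i + if hi : i ∈ T then w ⟨i, hi⟩ - c i else 0 := by
  funext i
  by_cases hi : i ∈ T <;> simp [replaceOn, hi]

lemma natCast_le_div_mul_iff {N : ℕ} (hN : 0 < N) (k t : ℕ) :
    (k : ℝ) ≤ (t : ℝ) / N * N ↔ k ≤ t := by
  rw [div_mul_cancel₀ _ (by positivity)]
  exact Nat.cast_le

section
variable {V : Type} [Fintype V] {N : ℕ} (C : Code V N) {ρ : ℝ} {t : ℕ}

lemma Code.smtSecrecy_iff_secrecy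
    (hcard : ∀ S : Finset (Fin N), (S.card : ℝ) ≤ ρ * N ↔ S.card ≤ t) (ε : ℝ) :
    C.SMTSecrecy ε t ↔ C.Secrecy ε ρ :=
  forall_congr' fun S => imp_congr (hcard S).symm Iff.rfl

lemma Code.smtReliability_iff_restrictedReliability [AddCommGroup V]
    (hcard : ∀ S : Finset (Fin N), (S.card : ℝ) ≤ ρ * N ↔ S.card ≤ t) (δ : ℝ) :
    C.SMTReliability δ t ↔ C.RestrictedReliability δ ρ := by
  constructor
  · intro hr PM hPM hPM1 S hS 𝓣 _ PT hPT hPT1 g hg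
    simpa only [replaceOn_add_of_support _ _ (hg _ _)] using
      hr PM hPM hPM1 S ((hcard S).1 hS) 𝓣 PT hPT hPT1 fun x τ i => x i + g x τ i.val
  · intro hr PM hPM hPM1 T hT 𝓣 _ PT hPT hPT1 h
    simpa only [replaceOn_eq_add] using
      hr PM hPM hPM1 T ((hcard T).2 hT) 𝓣 PT hPT hPT1
        (fun x τ i => if hi : i ∈ T then h x τ ⟨i, hi⟩ - x ⟨i, hi⟩ else 0)
        (fun x τ i hi => dif_neg hi)

end

theorem smt_iff_restricted_awtp_general
    (V : Type) [Fintype V] [AddCommGroup V]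
    (N t : ℕ) (hN : 0 < N)
    (ρ : ℝ) (hρ : ρ = (t : ℝ) / N)
    (ε δ : ℝ) (C : Code V N) :
    (C.SMTSecrecy ε t ∧ C.SMTReliability δ t) ↔
      (C.Secrecy ε ρ ∧ C.RestrictedReliability δ ρ) := by
  have hcard (S : Finset (Fin N)) : (S.card : ℝ) ≤ ρ * N ↔ S.card ≤ t :=
    hρ ▸ natCast_le_div_mul_iff hN S.card t
  exact and_congr (C.smtSecrecy_iff_secrecy hcard ε)
    (C.smtReliability_iff_restrictedReliability hcard δ)

/-- A pair `(Enc, Dec)` is a 1-round `(ε,δ)`-SMT protocol over `N` wires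
against `t`-threshold adversaries iff, taking `Σ := V` and `ρ := t/N`, it is an
`(ε,δ)`-restricted-AWTP code of length `N` with reading/writing ratio `ρ`:
replacement of the symbols on a set by values computed from the observation is
equivalent to adding an error vector supported on the same set, and the two
secrecy conditions coincide. -/
theorem smt_iff_restricted_awtp
    (V : Type) [Fintype V] [AddCommGroup V] (hV : 2 ≤ Fintype.card V)
    (N t : ℕ) (hN : 0 < N) (ht : t ≤ N)
    (ρ : ℝ) (hρ : ρ = (t : ℝ) / N)
    (ε δ : ℝ) (C : Code V N) (hM : 2 ≤ Fintype.card C.Mt) :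
    (C.SMTSecrecy ε t ∧ C.SMTReliability δ t) ↔
      (C.Secrecy ε ρ ∧ C.RestrictedReliability δ ρ) :=
  smt_iff_restricted_awtp_general V N t hN ρ hρ ε δ C
end AWTP
end
end

section
/- Let K be a field, let k ≥ 1 and v ≥ 1 be integers, let B₀ ∈ K[X] be a nonzero polynomial with deg B₀ ≤ v − 1, and let γ_0, γ_1, …, γ_{k−1} be pairwise distinct elements of K. Let T be any k × k lower-triangular matrix over K whose diagonal entries are T_{j,j} = B₀(γ_{j−1}) for j = 1, …, k. Then rank(T) ≥ k − (v − 1); consequently the kernel of T has dimension at most v − 1, and for any b ∈ K^k the solution set { f ∈ K^k : T·f = b } is either empty or an affine subspace of K^k of dimension at most v − 1 (hence, if K = F_q, it has at most q^{v−1} elements). -/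
open Finset Polynomial

noncomputable section

open scoped Classical

/-!
A lower-triangular matrix has rank at least the number of its nonzero diagonal entries, since
the principal submatrix on those indices is triangular with nonzero determinant. The diagonal
entries `B₀(γ_j)` vanish only at roots of `B₀`, and the distinct points `γ_j` hit at most
`deg B₀ ≤ v - 1` of them. Rank–nullity then bounds the kernel, and every nonempty fibre of a
linear map is a translate of its kernel.
-/

theorem Polynomial.card_filter_eval_eq_zero_le_natDegree {ι R : Type*} [Fintype ι] [CommRing R]
    [IsDomain R] {p : R[X]} (hp : p ≠ 0) {γ : ι → R} (hγ : Function.Injective γ) :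
    #{i | p.eval (γ i) = 0} ≤ p.natDegree := by
  rw [← card_image_of_injective _ hγ]
  refine card_le_degree_of_subset_roots fun x hx => ?_
  obtain ⟨i, hi, rfl⟩ := mem_image.mp hx
  exact (mem_roots hp).mpr (mem_filter.mp hi).2

theorem Matrix.IsLowerTriangular.card_diag_ne_zero_le_rank {m R : Type*} [Fintype m]
    [LinearOrder m] [CommRing R] [IsDomain R] {A : Matrix m m R} (hA : A.IsLowerTriangular) :
    #{i | A i i ≠ 0} ≤ A.rank := by
  let S := {i // A i i ≠ 0}
  let B : Matrix S S R := A.submatrix Subtype.val Subtype.val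
  have hB : B.IsLowerTriangular := hA.submatrix
  have hdet : B.det ≠ 0 := by
    rw [det_of_isLowerTriangular B hB]
    exact prod_ne_zero_iff.mpr fun i _ => i.2
  calc #{i | A i i ≠ 0} = Fintype.card S := (Fintype.card_subtype _).symm
    _ = B.rank := (rank_of_det_ne_zero hdet).symm
    _ ≤ A.rank := rank_submatrix_le A _ _

theorem Matrix.rank_add_finrank_ker {n K : Type*} [Fintype n] [Field K] (A : Matrix n n K) :
    A.rank + Module.finrank K (LinearMap.ker A.mulVecLin) = Fintype.card n := by
  rw [rank, LinearMap.finrank_range_add_finrank_ker, Module.finrank_fintype_fun_eq_card]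

theorem LinearMap.setOf_apply_eq_eq_image_add_ker {R M N : Type*} [Ring R] [AddCommGroup M]
    [AddCommGroup N] [Module R M] [Module R N] (f : M →ₗ[R] N) {x₀ : M} {b : N} (hx₀ : f x₀ = b) :
    {x | f x = b} = (x₀ + ·) '' (ker f : Set M) := by
  ext x
  refine ⟨fun (hx : f x = b) => ⟨x - x₀, by simp [hx, hx₀], add_sub_cancel x₀ x⟩, ?_⟩
  rintro ⟨y, hy, rfl⟩
  simp_all

theorem LinearMap.ncard_setOf_apply_eq_le {K V W : Type*} [Field K] [Fintype K] [AddCommGroup V]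
    [Module K V] [Module.Finite K V] [AddCommGroup W] [Module K W] (f : V →ₗ[K] W) (b : W) :
    {x | f x = b}.ncard ≤ Fintype.card K ^ Module.finrank K (ker f) := by
  rcases Set.eq_empty_or_nonempty {x | f x = b} with h | ⟨x₀, hx₀⟩
  · simp [h]
  have : Fintype V := Module.fintypeOfFintype (Module.finBasis K V)
  rw [f.setOf_apply_eq_eq_image_add_ker hx₀, Set.ncard_image_of_injective _ (add_right_injective x₀),
    Set.ncard_eq_toFinset_card', Set.toFinset_card, ← Module.card_eq_pow_finrank]
  rfl

theorem frs_list_in_affine_subspace_general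
    (K : Type) [Field K]
    (k v : ℕ)
    (B₀ : Polynomial K) (hB₀ : B₀ ≠ 0) (hdeg : B₀.natDegree ≤ v - 1)
    (γ : Fin k → K) (hγ : Function.Injective γ)
    (T : Matrix (Fin k) (Fin k) K)
    (hlow : ∀ i j : Fin k, i < j → T i j = 0)
    (hdiag : ∀ j : Fin k, T j j = B₀.eval (γ j)) :
    k - (v - 1) ≤ T.rank ∧
      Module.finrank K (LinearMap.ker T.mulVecLin) ≤ v - 1 ∧
      (∀ b : Fin k → K,
        {f : Fin k → K | T.mulVec f = b} = ∅ ∨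
        ∃ f₀ : Fin k → K,
          {f : Fin k → K | T.mulVec f = b} =
            (fun g => f₀ + g) '' (LinearMap.ker T.mulVecLin : Set (Fin k → K))) ∧
      ∀ (_ : Fintype K), ∀ b : Fin k → K,
        Set.ncard {f : Fin k → K | T.mulVec f = b} ≤ Fintype.card K ^ (v - 1) := by
  have hzeros : #{j | T j j = 0} ≤ v - 1 := by
    simp only [hdiag]
    exact (card_filter_eval_eq_zero_le_natDegree hB₀ hγ).trans hdeg
  have hrank : k - (v - 1) ≤ T.rank := by
    have hsplit := card_filter_add_card_filter_not (s := univ) (p := fun j : Fin k => T j j ≠ 0)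
    have hdiag_rank := Matrix.IsLowerTriangular.card_diag_ne_zero_le_rank (A := T)
      fun i j hij => hlow i j hij
    simp only [not_not, card_univ, Fintype.card_fin] at hsplit
    omega
  have hker : Module.finrank K (LinearMap.ker T.mulVecLin) ≤ v - 1 := by
    have := T.rank_add_finrank_ker
    rw [Fintype.card_fin] at this
    omega
  refine ⟨hrank, hker, fun b => ?_, fun _ b => ?_⟩
  · rcases Set.eq_empty_or_nonempty {f | T.mulVec f = b} with h | ⟨f₀, hf₀⟩
    · exact .inl h
    · exact .inr ⟨f₀, T.mulVecLin.setOf_apply_eq_eq_image_add_ker hf₀⟩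
  · exact (T.mulVecLin.ncard_setOf_apply_eq_le b).trans
      (Nat.pow_le_pow_right Fintype.card_pos hker)

/-- The rank claim behind linear-algebraic list decoding of folded
Reed–Solomon codes: a `k × k` lower-triangular matrix `T` whose `j`-th diagonal
entry is `B₀(γ_j)`, where `B₀ ≠ 0` has degree at most `v - 1` and the `γ_j`
are pairwise distinct, has rank at least `k - (v - 1)`; hence its kernel has
dimension at most `v - 1`, every solution set of `T f = b` is empty or a coset
of the kernel, and over a finite field `F_q` it has at most `q^{v-1}`
elements. -/
theorem frs_list_in_affine_subspace
    (K : Type) [Field K]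
    (k v : ℕ) (hk : 1 ≤ k) (hv : 1 ≤ v)
    (B₀ : Polynomial K) (hB₀ : B₀ ≠ 0) (hdeg : B₀.natDegree ≤ v - 1)
    (γ : Fin k → K) (hγ : Function.Injective γ)
    (T : Matrix (Fin k) (Fin k) K)
    (hlow : ∀ i j : Fin k, i < j → T i j = 0)
    (hdiag : ∀ j : Fin k, T j j = B₀.eval (γ j)) :
    k - (v - 1) ≤ T.rank ∧
      Module.finrank K (LinearMap.ker T.mulVecLin) ≤ v - 1 ∧
      (∀ b : Fin k → K,
        {f : Fin k → K | T.mulVec f = b} = ∅ ∨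
        ∃ f₀ : Fin k → K,
          {f : Fin k → K | T.mulVec f = b} =
            (fun g => f₀ + g) '' (LinearMap.ker T.mulVecLin : Set (Fin k → K))) ∧
      ∀ (_ : Fintype K), ∀ b : Fin k → K,
        Set.ncard {f : Fin k → K | T.mulVec f = b} ≤ Fintype.card K ^ (v - 1) :=
  frs_list_in_affine_subspace_general K k v B₀ hB₀ hdeg γ hγ T hlow hdiag
end
end
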